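/- If 0 < p ≤ 2, then for all r > 0, I_p(r) ≥ I_p(1)·(1 + r)/2. -/

import Mathlib

open MeasureTheory

noncomputable def e (t : ℝ) : ℂ := Complex.exp (2 * Real.pi * Complex.I * t)

/-- I_p(r) = ∫₀¹ |1 - r^{1/p} e(t)|^p dt -/
noncomputable def Ip (p r : ℝ) : ℝ :=
  ∫ t in (0:ℝ)..1, ‖(1 - ((r ^ (1/p) : ℝ) : ℂ) * e t)‖ ^ p

/-!
Pair `t` with `t + 1/2`, where `e` changes sign. Writing `q = p/2 ≤ 1`, `s = r^{1/p}` and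
`c = Re e(t)`, we have `|1 ∓ s e(t)|² = 1 + s² ∓ 2sc`, so the claim reduces to the pointwise bound
`(1 + s^{2q})/2 · ((2 - 2c)^q + (2 + 2c)^q) ≤ (1 + s² - 2sc)^q + (1 + s² + 2sc)^q`.
With `M = 1 + s²`, concavity of `x ↦ x^q` gives `(1 + s^{2q})/2 ≤ (M/2)^q`, which turns the left
side into `(M - Mc)^q + (M + Mc)^q`; since `2s ≤ M`, moving the symmetric pair `M ± Mc` inward to
`M ± 2sc` can only increase the sum of the values of a concave function.
-/

open Real

theorem ConcaveOn.map_sub_add_map_add_le_of_le_one {s : Set ℝ} {f : ℝ → ℝ}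
    (hf : ConcaveOn ℝ s f) {m y σ : ℝ} (hm_sub : m - y ∈ s) (hm_add : m + y ∈ s)
    (hσ₀ : 0 ≤ σ) (hσ₁ : σ ≤ 1) :
    f (m - y) + f (m + y) ≤ f (m - σ * y) + f (m + σ * y) := by
  -- `m ± σ y` are convex combinations of `m ± y` with weights `(1 ± σ) / 2`
  have ha : 0 ≤ (1 + σ) / 2 := by linarith
  have hb : 0 ≤ (1 - σ) / 2 := by linarith
  have hab : (1 + σ) / 2 + (1 - σ) / 2 = 1 := by ring
  have h_add := hf.2 hm_add hm_sub ha hb hab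
  have h_sub := hf.2 hm_sub hm_add ha hb hab
  simp only [smul_eq_mul] at h_add h_sub
  have e_add : (1 + σ) / 2 * (m + y) + (1 - σ) / 2 * (m - y) = m + σ * y := by ring
  have e_sub : (1 + σ) / 2 * (m - y) + (1 - σ) / 2 * (m + y) = m - σ * y := by ring
  rw [e_add] at h_add
  rw [e_sub] at h_sub
  linarith

theorem one_add_rpow_div_two_le {q s : ℝ} (hq₀ : 0 ≤ q) (hq₁ : q ≤ 1) (hs : 0 ≤ s) :
    (1 + s ^ q) / 2 ≤ ((1 + s) / 2) ^ q := by
  have h := (concaveOn_rpow hq₀ hq₁).2 (Set.mem_Ici.2 zero_le_one) (Set.mem_Ici.2 hs)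
    (by norm_num : (0 : ℝ) ≤ 1 / 2) (by norm_num : (0 : ℝ) ≤ 1 / 2) (by norm_num)
  simp only [smul_eq_mul, one_rpow] at h
  rw [show (1 + s) / 2 = 1 / 2 * 1 + 1 / 2 * s by ring]
  linarith

theorem le_rpow_one_add_sq_sub_add_rpow_one_add_sq_add {q s c : ℝ} (hq₀ : 0 < q) (hq₁ : q ≤ 1)
    (hs : 0 ≤ s) (hc₀ : -1 ≤ c) (hc₁ : c ≤ 1) :
    (1 + s ^ (2 * q)) / 2 * ((2 - 2 * c) ^ q + (2 + 2 * c) ^ q) ≤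
      (1 + s ^ 2 - 2 * s * c) ^ q + (1 + s ^ 2 + 2 * s * c) ^ q := by
  set M := 1 + s ^ 2
  have hM₀ : 0 < M := by positivity
  have h_mean : (1 + s ^ (2 * q)) / 2 ≤ (M / 2) ^ q := by
    rw [rpow_mul hs, rpow_two]
    exact one_add_rpow_div_two_le hq₀.le hq₁ (sq_nonneg s)
  have h_scale : (M / 2) ^ q * ((2 - 2 * c) ^ q + (2 + 2 * c) ^ q) =
      (M - M * c) ^ q + (M + M * c) ^ q := by
    rw [mul_add, ← mul_rpow (by positivity) (by linarith),
      ← mul_rpow (by positivity) (by linarith)]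
    ring_nf
  have h_shrink := (concaveOn_rpow hq₀.le hq₁).map_sub_add_map_add_le_of_le_one
    (m := M) (y := M * c) (σ := 2 * s / M) (Set.mem_Ici.2 (by nlinarith))
    (Set.mem_Ici.2 (by nlinarith)) (by positivity)
    ((div_le_one hM₀).2 (by nlinarith [sq_nonneg (1 - s)]))
  have hσ : 2 * s / M * (M * c) = 2 * s * c := by field_simp
  rw [hσ] at h_shrink
  calc (1 + s ^ (2 * q)) / 2 * ((2 - 2 * c) ^ q + (2 + 2 * c) ^ q)
      ≤ (M / 2) ^ q * ((2 - 2 * c) ^ q + (2 + 2 * c) ^ q) := by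
        gcongr
        have := rpow_nonneg (by linarith : 0 ≤ 2 - 2 * c) q
        have := rpow_nonneg (by linarith : 0 ≤ 2 + 2 * c) q
        positivity
    _ ≤ _ := h_scale ▸ h_shrink

@[fun_prop]
theorem continuous_e : Continuous e := by
  unfold e; fun_prop

theorem norm_e (t : ℝ) : ‖e t‖ = 1 := by
  rw [e, show 2 * (π : ℂ) * Complex.I * t = ((2 * π * t : ℝ) : ℂ) * Complex.I by push_cast; ring]
  exact Complex.norm_exp_ofReal_mul_I _

theorem e_add_half (t : ℝ) : e (t + 1 / 2) = -e t := by
  rw [e, e, show 2 * (π : ℂ) * Complex.I * ((t + 1 / 2 : ℝ) : ℂ) =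
    2 * π * Complex.I * t + π * Complex.I by push_cast; ring, Complex.exp_add, Complex.exp_pi_mul_I]
  ring

theorem Complex.norm_one_sub_ofReal_mul_sq {z : ℂ} (hz : ‖z‖ = 1) (s : ℝ) :
    ‖1 - s * z‖ ^ 2 = 1 + s ^ 2 - 2 * s * z.re := by
  have hz' := Complex.normSq_apply z
  rw [← Complex.sq_norm, hz] at hz'
  rw [Complex.sq_norm, Complex.normSq_apply]
  simp only [sub_re, one_re, mul_re, ofReal_re, ofReal_im, zero_mul, sub_zero, sub_im, one_im,
    mul_im, add_zero, zero_sub, mul_neg, neg_mul, neg_neg]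
  linear_combination (-s ^ 2) * hz'

theorem Complex.norm_one_add_ofReal_mul_sq {z : ℂ} (hz : ‖z‖ = 1) (s : ℝ) :
    ‖1 + s * z‖ ^ 2 = 1 + s ^ 2 + 2 * s * z.re := by
  rw [show (1 : ℂ) + s * z = 1 - ((-s : ℝ) : ℂ) * z by push_cast; ring,
    norm_one_sub_ofReal_mul_sq hz]
  ring

theorem rpow_norm_eq_sq_rpow_half {E : Type*} [SeminormedAddCommGroup E] (x : E) (p : ℝ) :
    ‖x‖ ^ p = (‖x‖ ^ 2) ^ (p / 2) := by
  rw [← rpow_natCast, ← rpow_mul (norm_nonneg x)]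
  ring_nf

theorem rpow_norm_one_sub_add_rpow_norm_one_add_le {p ρ : ℝ} (hp₀ : 0 < p) (hp₂ : p ≤ 2)
    (hρ : 0 ≤ ρ) {z : ℂ} (hz : ‖z‖ = 1) :
    (1 + ρ ^ p) / 2 * (‖1 - z‖ ^ p + ‖1 + z‖ ^ p) ≤ ‖1 - ρ * z‖ ^ p + ‖1 + ρ * z‖ ^ p := by
  have hre := abs_le.1 ((Complex.abs_re_le_norm z).trans_eq hz)
  have h := le_rpow_one_add_sq_sub_add_rpow_one_add_sq_add (q := p / 2) (c := z.re)
    (by linarith) (by linarith) hρ hre.1 hre.2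
  have h_one_sub := Complex.norm_one_sub_ofReal_mul_sq hz 1
  have h_one_add := Complex.norm_one_add_ofReal_mul_sq hz 1
  simp only [Complex.ofReal_one, one_mul, one_pow, mul_one, one_add_one_eq_two]
    at h_one_sub h_one_add
  rw [mul_div_cancel₀ p two_ne_zero] at h
  simp only [rpow_norm_eq_sq_rpow_half _ p, h_one_sub, h_one_add,
    Complex.norm_one_sub_ofReal_mul_sq hz, Complex.norm_one_add_ofReal_mul_sq hz]
  exact h

theorem intervalIntegral_eq_integral_add_shift {E : Type*} [NormedAddCommGroup E]
    [NormedSpace ℝ E] {f : ℝ → E} (hf : Continuous f) (a d : ℝ) :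
    ∫ x in a..a + 2 * d, f x = ∫ x in a..a + d, (f x + f (x + d)) := by
  have hf_shift : Continuous fun x => f (x + d) := hf.comp (continuous_add_const d)
  rw [intervalIntegral.integral_add (hf.intervalIntegrable _ _) (hf_shift.intervalIntegrable _ _),
    intervalIntegral.integral_comp_add_right f d,
    intervalIntegral.integral_add_adjacent_intervals (hf.intervalIntegrable _ _)
      (hf.intervalIntegrable _ _)]
  ring_nf

theorem continuous_rpow_norm_one_sub_mul_e_add {p : ℝ} (hp : 0 ≤ p) (b : ℂ) :
    Continuous fun t => ‖1 - b * e t‖ ^ p + ‖1 + b * e t‖ ^ p := by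
  fun_prop (disch := exact Or.inr hp)

theorem Ip_eq_integral_half (p r : ℝ) (hp : 0 ≤ p) :
    Ip p r = ∫ t in (0 : ℝ)..1 / 2,
      (‖1 - ((r ^ (1 / p) : ℝ) : ℂ) * e t‖ ^ p + ‖1 + ((r ^ (1 / p) : ℝ) : ℂ) * e t‖ ^ p) := by
  have hf : Continuous fun t => ‖1 - ((r ^ (1 / p) : ℝ) : ℂ) * e t‖ ^ p := by
    fun_prop (disch := exact Or.inr hp)
  have h := intervalIntegral_eq_integral_add_shift hf 0 (1 / 2)
  rw [show (0 : ℝ) + 2 * (1 / 2) = 1 by norm_num, zero_add] at h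
  rw [Ip, h]
  simp only [e_add_half, mul_neg, sub_neg_eq_add]

theorem Ip_lower_bound (p r : ℝ) (hp0 : 0 < p) (hp2 : p ≤ 2) (hr : 0 < r) :
    Ip p r ≥ Ip p 1 * (1 + r) / 2 := by
  have hρ : (r ^ (1 / p)) ^ p = r := by
    rw [one_div, rpow_inv_rpow hr.le hp0.ne']
  rw [ge_iff_le, Ip_eq_integral_half p r hp0.le, Ip_eq_integral_half p 1 hp0.le, one_rpow,
    mul_div_assoc, ← intervalIntegral.integral_mul_const]
  refine intervalIntegral.integral_mono_on (by norm_num)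
    (((continuous_rpow_norm_one_sub_mul_e_add hp0.le _).mul continuous_const).intervalIntegrable _ _)
    ((continuous_rpow_norm_one_sub_mul_e_add hp0.le _).intervalIntegrable _ _) fun t _ => ?_
  have h := rpow_norm_one_sub_add_rpow_norm_one_add_le hp0 hp2 (rpow_nonneg hr.le (1 / p))
    (norm_e t)
  rw [hρ] at h
  simp only [Complex.ofReal_one, one_mul]
  linear_combination h
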